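/- Completeness of the almost-sure algorithm: every state outside the final fixed point X* is not almost-surely winning — for any strategy of the controller from v ∉ X*, there exist transition probabilities consistent with the supports (indeed, any such probabilities) under which the probability of reaching F is strictly less than 1. -/

import Mathlib

noncomputable section

/-- A one-player stochastic game (MDP with positive-support semantics):
states are partitioned into controlled states (`isC v = true`, where the controller
picks an action with a deterministic transition) and probabilistic states
(`isC v = false`, where a successor in the known support `supp v` is chosen at random
with some positive probability). -/
structure OneMDP (V A : Type) where
  isC : V → Bool
  trans : V → A → Option V
  supp : V → Set V

namespace OneMDP

variable {V A : Type}

/-- `Pre(Y, X)`: states in `X` from which the controller can ensure to move into `Y` with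
positive probability while staying in `X` with probability one: controlled states with
some action leading into `Y`, and probabilistic states all of whose support-successors
lie in `X` with at least one in `Y`. -/
def Pre (M : OneMDP V A) (Y X : Set V) : Set V :=
  X ∩ ({v | M.isC v = true ∧ ∃ a v', M.trans v a = some v' ∧ v' ∈ Y} ∪
       {v | M.isC v = false ∧ M.supp v ⊆ X ∧ (M.supp v ∩ Y).Nonempty})

/-- The inner iteration: `Y 0 = F`, `Y (i+1) = Y i ∪ Pre(Y i, X)`. -/
def Yseq (M : OneMDP V A) (F X : Set V) : ℕ → Set V
  | 0 => F
  | i + 1 => Yseq M F X i ∪ M.Pre (Yseq M F X i) X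

/-- The inner least fixed point (reached after `|V|` iterations). -/
def innerFix [Fintype V] (M : OneMDP V A) (F X : Set V) : Set V :=
  Yseq M F X (Fintype.card V)

/-- The outer iteration: `X 0 = V`, `X (k+1) = lfp Y` of the inner iteration with
parameter `X k`. -/
def Xseq [Fintype V] (M : OneMDP V A) (F : Set V) : ℕ → Set V
  | 0 => Set.univ
  | k + 1 => M.innerFix F (Xseq M F k)

/-- The final outer fixed point `X*`. -/
def Xstar [Fintype V] (M : OneMDP V A) (F : Set V) : Set V :=
  Xseq M F (Fintype.card V)

/-- `p` is a valid assignment of transition probabilities for the probabilistic states: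
at each probabilistic state it is a probability distribution positive exactly on the
known support. -/
def ValidProbs [Fintype V] (M : OneMDP V A) (p : V → V → ℝ) : Prop :=
  ∀ v, M.isC v = false →
    (∀ v', (0 < p v v' ↔ v' ∈ M.supp v)) ∧ (∀ v', 0 ≤ p v v') ∧ ∑ v' : V, p v v' = 1

/-- Probability of reaching `F` within `n` steps under a memoryless controller strategy
`σ` and probabilities `p` at probabilistic states (`F` is absorbing by construction). -/
def mreach [Fintype V] (M : OneMDP V A) (p : V → V → ℝ) (σ : V → A) (F : Set V)
    [DecidablePred (· ∈ F)] : ℕ → V → ℝ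
  | 0, v => if v ∈ F then 1 else 0
  | n + 1, v =>
      if v ∈ F then 1
      else if M.isC v then (M.trans v (σ v)).elim 0 (mreach M p σ F n)
      else ∑ v' : V, p v v' * mreach M p σ F n v'

/-- Probability of reaching `F` within `n` steps under a history-dependent controller
strategy `σ`, from history `h` and current state `v`. -/
def hreach [Fintype V] (M : OneMDP V A) (p : V → V → ℝ) (σ : List V → A) (F : Set V)
    [DecidablePred (· ∈ F)] : ℕ → List V → V → ℝ
  | 0, _, v => if v ∈ F then 1 else 0
  | n + 1, h, v =>
      if v ∈ F then 1
      else if M.isC v then (M.trans v (σ (h ++ [v]))).elim 0 (hreach M p σ F n (h ++ [v]))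
      else ∑ v' : V, p v v' * hreach M p σ F n (h ++ [v]) v'

end OneMDP

/-! From `v ∉ X_k` the controller cannot keep the probability of reaching `F` above
`1 - ε ^ k`, where `ε` is the least positive transition probability. Indeed, a state of
`X_k \ X_{k+1}` is not in `F` and not in `Pre(X_{k+1}, X_k)`: every controlled move stays
outside `X_{k+1}`, and a probabilistic state either leaves `X_k` with probability at least `ε`
(where the bound `1 - ε ^ k` applies) or stays outside `X_{k+1}` surely. Induction on the
horizon turns this into the bound `1 - ε ^ (k + 1)`, uniformly in the horizon and the history,
and `X* = X_{|V|}`. -/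

theorem Set.iterate_card_succ_eq_of_subset {α : Type*} [Fintype α] (f : Set α → Set α)
    (hf : ∀ s, s ⊆ f s) (s : Set α) :
    f^[Fintype.card α + 1] s = f^[Fintype.card α] s := by
  by_contra hne
  have hstrict : ∀ i ≤ Fintype.card α, f^[i] s ⊂ f^[i + 1] s := by
    intro i hi
    rw [Function.iterate_succ_apply']
    refine (hf _).ssubset_of_ne fun hfix => hne ?_
    obtain ⟨j, hj⟩ := Nat.exists_eq_add_of_le hi
    have hfix' : Function.IsFixedPt f (f^[i] s) := hfix.symm
    rw [hj, show i + j + 1 = (j + 1) + i by omega, Function.iterate_add_apply,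
      (hfix'.iterate _).eq, add_comm i, Function.iterate_add_apply, (hfix'.iterate _).eq]
  have hcard : ∀ i ≤ Fintype.card α + 1, i ≤ (f^[i] s).ncard := by
    intro i
    induction i with
    | zero => intro _; exact Nat.zero_le _
    | succ i ih =>
      intro hi
      exact (ih (by omega)).trans_lt
        (Set.ncard_lt_ncard (hstrict i (by omega)) (Set.toFinite _))
  have := (hcard _ le_rfl).trans ((Set.ncard_le_card _).trans (Nat.card_eq_fintype_card).le)
  omega

theorem Finset.sum_mul_le_of_le_of_pos {ι : Type*} (s : Finset ι) {p f : ι → ℝ} {c : ℝ}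
    (hp : ∀ i ∈ s, 0 ≤ p i) (hsum : ∑ i ∈ s, p i = 1) (hf : ∀ i ∈ s, 0 < p i → f i ≤ c) :
    ∑ i ∈ s, p i * f i ≤ c :=
  calc ∑ i ∈ s, p i * f i ≤ ∑ i ∈ s, p i * c := by
        refine Finset.sum_le_sum fun i hi => ?_
        rcases (hp i hi).lt_or_eq with hpos | hzero
        · exact mul_le_mul_of_nonneg_left (hf i hi hpos) hpos.le
        · simp [← hzero]
    _ = c := by rw [← Finset.sum_mul, hsum, one_mul]

theorem Finset.sum_mul_le_one_sub {ι : Type*} [DecidableEq ι] (s : Finset ι) {p f : ι → ℝ}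
    {w : ι} {δ : ℝ} (hw : w ∈ s) (hp : ∀ i ∈ s, 0 ≤ p i) (hsum : ∑ i ∈ s, p i = 1)
    (hf : ∀ i ∈ s, f i ≤ 1) (hfw : f w ≤ 1 - δ) :
    ∑ i ∈ s, p i * f i ≤ 1 - p w * δ :=
  calc ∑ i ∈ s, p i * f i ≤ ∑ i ∈ s, (p i - if i = w then p w * δ else 0) := by
        refine Finset.sum_le_sum fun i hi => ?_
        split_ifs with hiw
        · subst hiw; nlinarith [hp i hi]
        · nlinarith [hp i hi, hf i hi]
    _ = 1 - p w * δ := by rw [Finset.sum_sub_distrib, hsum, Finset.sum_ite_eq' s w, if_pos hw]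

namespace OneMDP

variable {V A : Type} (M : OneMDP V A)

theorem Yseq_eq_iterate (F X : Set V) (i : ℕ) :
    M.Yseq F X i = (fun Y => Y ∪ M.Pre Y X)^[i] F := by
  induction i with
  | zero => rfl
  | succ i ih => rw [Function.iterate_succ_apply', ← ih]; rfl

theorem subset_Yseq (F X : Set V) (i : ℕ) : F ⊆ M.Yseq F X i := by
  induction i with
  | zero => exact subset_rfl
  | succ i ih => exact ih.trans Set.subset_union_left

section innerFix

variable [Fintype V] {F X : Set V} {v : V}

theorem Pre_innerFix_subset (F X : Set V) : M.Pre (M.innerFix F X) X ⊆ M.innerFix F X := by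
  have hstable : M.Yseq F X (Fintype.card V + 1) = M.innerFix F X := by
    simp only [innerFix, Yseq_eq_iterate]
    exact Set.iterate_card_succ_eq_of_subset _ (fun _ => Set.subset_union_left) F
  have hPre : M.Pre (M.innerFix F X) X ⊆ M.Yseq F X (Fintype.card V + 1) :=
    Set.subset_union_right
  rwa [hstable] at hPre

theorem notMem_of_notMem_innerFix (hv : v ∉ M.innerFix F X) : v ∉ F :=
  fun hF => hv (M.subset_Yseq F X _ hF)

theorem trans_notMem_innerFix (hvX : v ∈ X) (hv : v ∉ M.innerFix F X) (hC : M.isC v = true)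
    {a : A} {w : V} (htr : M.trans v a = some w) : w ∉ M.innerFix F X :=
  fun hw => hv (M.Pre_innerFix_subset F X ⟨hvX, Or.inl ⟨hC, a, w, htr, hw⟩⟩)

theorem supp_not_subset_or_disjoint_innerFix (hvX : v ∈ X) (hv : v ∉ M.innerFix F X)
    (hC : M.isC v = false) :
    (∃ w ∈ M.supp v, w ∉ X) ∨ ∀ w ∈ M.supp v, w ∉ M.innerFix F X := by
  by_contra! h
  obtain ⟨hsupp, w, hw, hwY⟩ := h
  exact hv (M.Pre_innerFix_subset F X ⟨hvX, Or.inr ⟨hC, hsupp, w, hw, hwY⟩⟩)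

end innerFix

section reach

variable [Fintype V] {p : V → V → ℝ} (σ : List V → A) (F : Set V) [DecidablePred (· ∈ F)]

theorem ValidProbs.exists_pos_le [Nonempty V] (hp : M.ValidProbs p) :
    ∃ ε, 0 < ε ∧ ε ≤ 1 ∧ ∀ u w, M.isC u = false → w ∈ M.supp u → ε ≤ p u w := by
  classical
  let weight : V × V → ℝ := fun q =>
    if M.isC q.1 = false ∧ q.2 ∈ M.supp q.1 then p q.1 q.2 else 1
  obtain ⟨q, hq⟩ := Finite.exists_min weight
  refine ⟨weight q, ?_, ?_, fun u w hu hw => by simpa [weight, hu, hw] using hq (u, w)⟩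
  · by_cases h : M.isC q.1 = false ∧ q.2 ∈ M.supp q.1
    · simpa [weight, h] using ((hp q.1 h.1).1 q.2).2 h.2
    · simp [weight, h]
  · by_cases h : M.isC q.1 = false ∧ q.2 ∈ M.supp q.1
    · obtain ⟨-, hnn, hsum⟩ := hp q.1 h.1
      simpa [weight, h, hsum] using
        Finset.single_le_sum (fun i _ => hnn i) (Finset.mem_univ q.2)
    · simp [weight, h]

theorem hreach_le_one (hp : M.ValidProbs p) (n : ℕ) (h : List V) (v : V) :
    M.hreach p σ F n h v ≤ 1 := by
  induction n generalizing h v with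
  | zero => simp only [hreach]; split_ifs <;> norm_num
  | succ n ih =>
    simp only [hreach]
    split_ifs with hF hC
    · rfl
    · cases M.trans v (σ (h ++ [v])) with
      | none => norm_num
      | some w => exact ih _ w
    · obtain ⟨-, hnn, hsum⟩ := hp v (by simpa using hC)
      exact Finset.sum_mul_le_of_le_of_pos _ (fun i _ => hnn i) hsum fun i _ _ => ih _ i

theorem hreach_le_of_notMem_innerFix (hp : M.ValidProbs p) {ε δ : ℝ}
    (hε : ∀ u w, M.isC u = false → w ∈ M.supp u → ε ≤ p u w) (hε1 : ε ≤ 1)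
    (hδ0 : 0 ≤ δ) (hδ1 : δ ≤ 1) {X : Set V}
    (hX : ∀ u ∉ X, ∀ n h, M.hreach p σ F n h u ≤ 1 - δ) (n : ℕ) (h : List V) (v : V)
    (hv : v ∉ M.innerFix F X) :
    M.hreach p σ F n h v ≤ 1 - ε * δ := by
  classical
  have hεδ : ε * δ ≤ δ := by nlinarith
  have hout : ∀ n h u, u ∉ X → M.hreach p σ F n h u ≤ 1 - ε * δ :=
    fun n h u hu => by linarith [hX u hu n h]
  induction n generalizing h v with
  | zero => simp only [hreach, if_neg (M.notMem_of_notMem_innerFix hv)]; linarith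
  | succ n ih =>
    by_cases hvX : v ∈ X
    swap
    · exact hout _ h v hvX
    simp only [hreach, if_neg (M.notMem_of_notMem_innerFix hv)]
    split_ifs with hC
    · cases htr : M.trans v (σ (h ++ [v])) with
      | none => simp only [Option.elim]; linarith
      | some w => exact ih _ w (M.trans_notMem_innerFix hvX hv hC htr)
    · have hC' : M.isC v = false := by simpa using hC
      obtain ⟨hpos, hnn, hsum⟩ := hp v hC'
      rcases M.supp_not_subset_or_disjoint_innerFix hvX hv hC' with ⟨w, hw, hwX⟩ | hall
      · -- leaving `X` through `w` costs at least `p v w * δ ≥ ε * δ`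
        have := Finset.sum_mul_le_one_sub Finset.univ (Finset.mem_univ w) (fun i _ => hnn i)
          hsum (fun i _ => M.hreach_le_one σ F hp n _ i) (hX w hwX n (h ++ [v]))
        nlinarith [hε v w hC' hw]
      · exact Finset.sum_mul_le_of_le_of_pos _ (fun i _ => hnn i) hsum
          fun w _ hpw => ih _ w (hall w ((hpos w).1 hpw))

theorem hreach_le_of_notMem_Xseq (hp : M.ValidProbs p) {ε : ℝ}
    (hε : ∀ u w, M.isC u = false → w ∈ M.supp u → ε ≤ p u w) (hε0 : 0 ≤ ε) (hε1 : ε ≤ 1)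
    (k n : ℕ) (h : List V) (v : V) (hv : v ∉ M.Xseq F k) :
    M.hreach p σ F n h v ≤ 1 - ε ^ k := by
  induction k generalizing n h v with
  | zero => exact absurd (Set.mem_univ v) hv
  | succ k ih =>
    rw [pow_succ']
    exact M.hreach_le_of_notMem_innerFix σ F hp hε hε1 (pow_nonneg hε0 k)
      (pow_le_one₀ hε0 hε1) (fun u hu n h => ih n h u hu) n h v hv

end reach

end OneMDP

/-- **Completeness of the almost-sure algorithm.**
Every state outside the final fixed point `X*` is not almost-surely winning: for any
(history-dependent) controller strategy from `v ∉ X*` and any transition probabilities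
consistent with the supports, the probability of reaching `F` is strictly less than 1. -/
theorem almost_sure_algorithm_complete {V A : Type} [Fintype V]
    (M : OneMDP V A) (F : Set V) [DecidablePred (· ∈ F)]
    (v : V) (hv : v ∉ M.Xstar F) :
    ∀ σ : List V → A, ∀ p : V → V → ℝ, M.ValidProbs p →
      (⨆ n : ℕ, M.hreach p σ F n [] v) < 1 := by
  intro σ p hp
  have : Nonempty V := ⟨v⟩
  obtain ⟨ε, hε0, hε1, hε⟩ := hp.exists_pos_le
  calc (⨆ n : ℕ, M.hreach p σ F n [] v)
      ≤ 1 - ε ^ Fintype.card V :=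
        ciSup_le fun n => M.hreach_le_of_notMem_Xseq σ F hp hε hε0.le hε1 _ n [] v hv
    _ < 1 := sub_lt_self 1 (pow_pos hε0 _)
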